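/- arXiv:2107.08277 — 2 statements merged into one kernel-verified Lean document; each statement's English description precedes it below -/
import Mathlib

section
/- Let $(M,d)$ be a metric space, and let $x, c, \hat{f}, g \in M$ (a demand, an optimal center, a prediction, and an open facility). Let $f > 0$ and set $r = d(\hat{f}, g)$, and suppose $r \le f$. If a facility is opened at $\hat{f}$ with probability $r/f$ (incurring cost $f + d(x, \hat{f})$) and otherwise $x$ connects to $g$ (incurring cost $d(x, g)$), then the expected cost is at most $d(x,c) + r + \frac{r}{f} d(\hat{f}, c) + \left(1 - \frac{r}{f}\right) d(g, c)$. -/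
theorem mul_dist_add_one_sub_mul_dist_le {M : Type*} [PseudoMetricSpace M] (x a b c : M)
    {p : ℝ} (hp₀ : 0 ≤ p) (hp₁ : p ≤ 1) :
    p * dist x a + (1 - p) * dist x b ≤ dist x c + p * dist a c + (1 - p) * dist b c := by
  have hq : 0 ≤ 1 - p := sub_nonneg.2 hp₁
  calc p * dist x a + (1 - p) * dist x b
      ≤ p * (dist x c + dist a c) + (1 - p) * (dist x c + dist b c) := by
        gcongr <;> exact dist_triangle_right _ _ _
    _ = dist x c + p * dist a c + (1 - p) * dist b c := by ring

theorem stmt1 {M : Type*} [MetricSpace M] (x c fhat g : M) (f r : ℝ)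
    (hf : 0 < f) (hr : r = dist fhat g) (hrf : r ≤ f) :
    (r / f) * (f + dist x fhat) + (1 - r / f) * dist x g
      ≤ dist x c + r + (r / f) * dist fhat c + (1 - r / f) * dist g c := by
  have hp₀ : 0 ≤ r / f := div_nonneg (hr ▸ dist_nonneg) hf.le
  have hp₁ : r / f ≤ 1 := (div_le_one hf).2 hrf
  calc (r / f) * (f + dist x fhat) + (1 - r / f) * dist x g
      = r + ((r / f) * dist x fhat + (1 - r / f) * dist x g) := by
        rw [mul_add, div_mul_cancel₀ r hf.ne']; ring
    _ ≤ r + (dist x c + (r / f) * dist fhat c + (1 - r / f) * dist g c) :=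
        add_le_add_right (mul_dist_add_one_sub_mul_dist_le x fhat g c hp₀ hp₁) r
    _ = dist x c + r + (r / f) * dist fhat c + (1 - r / f) * dist g c := by ring
end

section
/- Let $f > 0$, $m \ge 1$, $\lambda \ge 1$, and let $a, r, \eta, \eta' \ge 0$ satisfy $r \le f$, $r \le (m\lambda + 1)\eta$, and $\eta' \le m\lambda \eta$. Then $a + r + \frac{r}{f}\eta + \left(1 - \frac{r}{f}\right)\eta' \le a + (2m\lambda + 1)\eta$. -/
theorem convex_combination_le_of_le_mul {t k η η' : ℝ} (ht0 : 0 ≤ t) (ht1 : t ≤ 1)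
    (hk : 1 ≤ k) (hη : 0 ≤ η) (hη' : η' ≤ k * η) :
    t * η + (1 - t) * η' ≤ k * η := by
  have hη_le : η ≤ k * η := le_mul_of_one_le_left hη hk
  calc t * η + (1 - t) * η' ≤ t * (k * η) + (1 - t) * (k * η) := by gcongr
    _ = k * η := by ring

theorem stmt2_general (f m lam a r η η' : ℝ) (hf : 0 < f) (hm : 1 ≤ m) (hlam : 1 ≤ lam)
    (hr0 : 0 ≤ r) (hη : 0 ≤ η)
    (hrf : r ≤ f) (hr1 : r ≤ (m * lam + 1) * η) (hη'le : η' ≤ m * lam * η) :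
    a + r + (r / f) * η + (1 - r / f) * η' ≤ a + (2 * m * lam + 1) * η := by
  have hmix := convex_combination_le_of_le_mul (div_nonneg hr0 hf.le) ((div_le_one hf).2 hrf)
    (one_le_mul_of_one_le_of_one_le hm hlam) hη hη'le
  linarith

theorem stmt2 (f m lam a r η η' : ℝ) (hf : 0 < f) (hm : 1 ≤ m) (hlam : 1 ≤ lam)
    (ha : 0 ≤ a) (hr0 : 0 ≤ r) (hη : 0 ≤ η) (hη' : 0 ≤ η')
    (hrf : r ≤ f) (hr1 : r ≤ (m * lam + 1) * η) (hη'le : η' ≤ m * lam * η) :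
    a + r + (r / f) * η + (1 - r / f) * η' ≤ a + (2 * m * lam + 1) * η :=
  stmt2_general f m lam a r η η' hf hm hlam hr0 hη hrf hr1 hη'le
end
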